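/- arXiv:2309.16931 — 6 statements merged into one kernel-verified Lean document; each statement's English description precedes it below -/
import Mathlib

section
/- Let G be a simple undirected K-regular graph on N vertices with 1 ≤ K ≤ N−1, and let θ ∈ ℝ. Define for each agent i the payoff U_i(a) = a_i·((1/K)·Σ_{j∈N_i} a_j − (K/N)·θ) for action profiles a ∈ {0,1}^N, where N_i is the neighborhood of i. Define Φ(a) = (1/2)·Σ_{i=1}^N Σ_{j∈N_i} φ(a_i, a_j), where φ(x,y) = x·y/K + (1−x−y)·θ/N. Then Φ is an exact potential function for the game: for every agent m, every pair of actions a_m', a_m'' ∈ {0,1}, and every profile a_{−m} ∈ {0,1}^{N−1} of the other agents, U_m(a_m', a_{−m}) − U_m(a_m'', a_{−m}) = Φ(a_m', a_{−m}) − Φ(a_m'', a_{−m}). -/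
open Finset

/-- On a `K`-regular graph, `Φ(a) = (1/2) Σ_i Σ_{j ∈ N_i} φ(a_i,a_j)` with
`φ(x,y) = xy/K + (1-x-y)θ/N` is an exact potential function for the networked
coordination game with payoffs `U_i(a) = a_i ((1/K) Σ_{j ∈ N_i} a_j - (K/N) θ)`. -/
theorem stmt_1 (N K : ℕ) (hK : 1 ≤ K) (hKN : K ≤ N - 1)
    (G : SimpleGraph (Fin N)) [DecidableRel G.Adj]
    (hreg : G.IsRegularOfDegree K) (θ : ℝ)
    (U : Fin N → (Fin N → ℝ) → ℝ)
    (hU : ∀ i a, U i a =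
      a i * ((1 / (K : ℝ)) * ∑ j ∈ G.neighborFinset i, a j - ((K : ℝ) / (N : ℝ)) * θ))
    (φ : ℝ → ℝ → ℝ)
    (hφ : ∀ x y, φ x y = x * y / (K : ℝ) + (1 - x - y) * θ / (N : ℝ))
    (Φ : (Fin N → ℝ) → ℝ)
    (hΦ : ∀ a, Φ a = (1 / 2) * ∑ i, ∑ j ∈ G.neighborFinset i, φ (a i) (a j)) :
    ∀ (m : Fin N) (a : Fin N → ℝ), (∀ i, a i = 0 ∨ a i = 1) →
      ∀ a' a'' : ℝ, (a' = 0 ∨ a' = 1) → (a'' = 0 ∨ a'' = 1) →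
        U m (Function.update a m a') - U m (Function.update a m a'') =
          Φ (Function.update a m a') - Φ (Function.update a m a'') := by
  intro m a _ x y _ _
  have hmm : m ∉ G.neighborFinset m := by simp
  have hS : ∀ (z : ℝ), ∀ j ∈ G.neighborFinset m, Function.update a m z j = a j := by
    intro z j hj
    exact Function.update_of_ne (by rintro rfl; exact hmm hj) _ _
  have hcard : (G.neighborFinset m).card = K := hreg m
  -- the key formula for Φ on an updated profile
  have key : ∀ z : ℝ, Φ (Function.update a m z) =
      (1 / 2) * ((∑ j ∈ G.neighborFinset m, φ z (a j))
        + ∑ i ∈ univ.erase m,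
            ((if m ∈ G.neighborFinset i then φ (a i) z - φ (a i) (a m) else 0)
              + ∑ j ∈ G.neighborFinset i, φ (a i) (a j))) := by
    intro z
    rw [hΦ]
    rw [← Finset.add_sum_erase univ _ (mem_univ m)]
    congr 2
    · rw [Function.update_self]
      exact Finset.sum_congr rfl fun j hj => by rw [hS z j hj]
    · refine Finset.sum_congr rfl fun i hi => ?_
      have him : i ≠ m := (Finset.mem_erase.mp hi).1
      rw [Function.update_of_ne him]
      by_cases hm : m ∈ G.neighborFinset i
      · rw [← Finset.add_sum_erase _ _ hm,
          ← Finset.add_sum_erase _ (fun j => φ (a i) (a j)) hm,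
          Function.update_self, if_pos hm]
        have : ∑ j ∈ (G.neighborFinset i).erase m, φ (a i) (Function.update a m z j)
            = ∑ j ∈ (G.neighborFinset i).erase m, φ (a i) (a j) := by
          refine Finset.sum_congr rfl fun j hj => ?_
          rw [Function.update_of_ne (Finset.mem_erase.mp hj).1]
        rw [this]; ring
      · rw [if_neg hm, zero_add]
        refine Finset.sum_congr rfl fun j hj => ?_
        rw [Function.update_of_ne (by rintro rfl; exact hm hj)]
  have hfilter : (univ.erase m).filter (fun i => m ∈ G.neighborFinset i)
      = G.neighborFinset m := by
    ext i
    simp only [Finset.mem_filter, Finset.mem_erase, Finset.mem_univ, true_and, and_true,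
      SimpleGraph.mem_neighborFinset]
    constructor
    · rintro ⟨-, h⟩; exact h.symm
    · intro h; exact ⟨h.ne', h.symm⟩
  -- the sum of the "if" corrections over all other agents
  have hsub : ∑ i ∈ univ.erase m,
        (if m ∈ G.neighborFinset i then φ (a i) x - φ (a i) (a m) else 0)
      - ∑ i ∈ univ.erase m,
        (if m ∈ G.neighborFinset i then φ (a i) y - φ (a i) (a m) else 0)
      = ∑ j ∈ G.neighborFinset m, (φ (a j) x - φ (a j) y) := by
    rw [← Finset.sum_sub_distrib]
    have hpt : ∀ i ∈ univ.erase m,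
        ((if m ∈ G.neighborFinset i then φ (a i) x - φ (a i) (a m) else 0)
          - (if m ∈ G.neighborFinset i then φ (a i) y - φ (a i) (a m) else 0))
        = (if m ∈ G.neighborFinset i then φ (a i) x - φ (a i) y else 0) := by
      intro i _; split_ifs <;> ring
    rw [Finset.sum_congr rfl hpt, ← Finset.sum_filter, hfilter]
  -- compute the Φ difference
  have hΦdiff : Φ (Function.update a m x) - Φ (Function.update a m y)
      = (1 / 2) * ∑ j ∈ G.neighborFinset m,
          ((φ x (a j) - φ y (a j)) + (φ (a j) x - φ (a j) y)) := by
    rw [key x, key y]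
    have h1 : ∑ j ∈ G.neighborFinset m, (φ x (a j) - φ y (a j))
        = ∑ j ∈ G.neighborFinset m, φ x (a j)
          - ∑ j ∈ G.neighborFinset m, φ y (a j) := Finset.sum_sub_distrib _ _
    have h3 : ∑ j ∈ G.neighborFinset m,
          ((φ x (a j) - φ y (a j)) + (φ (a j) x - φ (a j) y))
        = ∑ j ∈ G.neighborFinset m, (φ x (a j) - φ y (a j))
          + ∑ j ∈ G.neighborFinset m, (φ (a j) x - φ (a j) y) :=
      Finset.sum_add_distrib
    have h4 : ∀ z : ℝ, ∑ i ∈ univ.erase m,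
          ((if m ∈ G.neighborFinset i then φ (a i) z - φ (a i) (a m) else 0)
            + ∑ j ∈ G.neighborFinset i, φ (a i) (a j))
        = ∑ i ∈ univ.erase m,
            (if m ∈ G.neighborFinset i then φ (a i) z - φ (a i) (a m) else 0)
          + ∑ i ∈ univ.erase m, ∑ j ∈ G.neighborFinset i, φ (a i) (a j) :=
      fun z => Finset.sum_add_distrib
    rw [h3, h4 x, h4 y]
    linarith [hsub, h1]
  -- compute the U difference
  have hUdiff : U m (Function.update a m x) - U m (Function.update a m y)
      = (x - y) * ((1 / (K : ℝ)) * ∑ j ∈ G.neighborFinset m, a j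
          - ((K : ℝ) / (N : ℝ)) * θ) := by
    have ex : ∑ j ∈ G.neighborFinset m, Function.update a m x j
        = ∑ j ∈ G.neighborFinset m, a j := Finset.sum_congr rfl (hS x)
    have ey : ∑ j ∈ G.neighborFinset m, Function.update a m y j
        = ∑ j ∈ G.neighborFinset m, a j := Finset.sum_congr rfl (hS y)
    rw [hU, hU, Function.update_self, Function.update_self, ex, ey]
    ring
  rw [hUdiff, hΦdiff]
  have hpt : ∀ j ∈ G.neighborFinset m,
      ((φ x (a j) - φ y (a j)) + (φ (a j) x - φ (a j) y))
      = (2 * (x - y) / (K : ℝ)) * a j + 2 * (y - x) * θ / (N : ℝ) := by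
    intro j _
    simp only [hφ]; ring
  rw [Finset.sum_congr rfl hpt, Finset.sum_add_distrib, ← Finset.mul_sum,
    Finset.sum_const, hcard, nsmul_eq_mul]
  ring
end

section
/- Let G be a connected simple undirected K-regular graph on N vertices with 2 ≤ K ≤ N−1, adjacency matrix A, and θ ∈ ℝ. Define Φ(a) = θK/2 − (θK/N)·Σ_{i=1}^N a_i + (1/(2K))·aᵀ A a for a ∈ {0,1}^N. Then every maximizer of Φ over {0,1}^N lies in the set {0_N, 1_N}, where 0_N is the all-zeros profile and 1_N is the all-ones profile. -/
open Finset Matrix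

/-- For a connected `K`-regular graph, every maximizer of the potential
`Φ(a) = θK/2 - (θK/N) Σ_i a_i + (1/(2K)) aᵀ A a` over `{0,1}^N` is `0_N` or `1_N`. -/
theorem stmt_3 (N K : ℕ) (hK : 2 ≤ K) (hKN : K ≤ N - 1)
    (G : SimpleGraph (Fin N)) [DecidableRel G.Adj]
    (hconn : G.Connected) (hreg : G.IsRegularOfDegree K) (θ : ℝ)
    (Φ : (Fin N → ℝ) → ℝ)
    (hΦ : ∀ a, Φ a = θ * (K : ℝ) / 2 - (θ * (K : ℝ) / (N : ℝ)) * (∑ i, a i)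
        + (1 / (2 * (K : ℝ))) * (a ⬝ᵥ (G.adjMatrix ℝ) *ᵥ a)) :
    ∀ a : Fin N → ℝ, (∀ i, a i = 0 ∨ a i = 1) →
      (∀ b : Fin N → ℝ, (∀ i, b i = 0 ∨ b i = 1) → Φ b ≤ Φ a) →
      a = (fun _ => (0 : ℝ)) ∨ a = (fun _ => (1 : ℝ)) := by
  intro a ha hmax
  by_contra hcon
  push_neg at hcon
  obtain ⟨h0, h1⟩ := hcon
  have hNpos : 0 < N := by omega
  have hKpos : (0:ℝ) < K := by exact_mod_cast (by omega : 0 < K)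
  have hNpos' : (0:ℝ) < N := by exact_mod_cast hNpos
  have hex1 : ∃ i, a i = 1 := by
    by_contra h; push_neg at h
    exact h0 (funext fun i => (ha i).resolve_right (h i))
  have hex0 : ∃ i, a i = 0 := by
    by_contra h; push_neg at h
    exact h1 (funext fun i => (ha i).resolve_left (h i))
  obtain ⟨u, hu⟩ := hex1
  obtain ⟨v, hv⟩ := hex0
  -- boundary dart
  obtain ⟨p⟩ := hconn.preconnected u v
  obtain ⟨d, -, hd1, hd2⟩ := p.exists_boundary_dart {i | a i = 1} hu (by simp [hv])
  have hale : ∀ j, a j ≤ 1 := fun j => by rcases ha j with h | h <;> simp [h]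
  have hd2' : a d.snd = 0 := (ha d.snd).resolve_right hd2
  set S : Finset (Fin N) := Finset.univ.filter (fun i => a i = 1) with hSdef
  have hdS : d.fst ∈ S := by simp [hSdef]; exact hd1
  set m : ℕ := S.card with hmdef
  set g : Fin N → ℝ := fun i => ∑ j ∈ G.neighborFinset i, (1 - a j) with hgdef
  set cut : ℝ := ∑ i ∈ S, g i with hcutdef
  have hg0 : ∀ i, 0 ≤ g i := fun i =>
    Finset.sum_nonneg fun j _ => by linarith [hale j]
  have hKne : (K:ℝ) ≠ 0 := ne_of_gt hKpos
  have hNne : (N:ℝ) ≠ 0 := ne_of_gt hNpos'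
  have hcut1 : (1:ℝ) ≤ cut := by
    have h1 : (1:ℝ) ≤ g d.fst := by
      have hmem : d.snd ∈ G.neighborFinset d.fst :=
        (SimpleGraph.mem_neighborFinset G d.fst d.snd).mpr d.adj
      have h2 : (1:ℝ) - a d.snd ≤ g d.fst :=
        Finset.single_le_sum (f := fun j => (1:ℝ) - a j)
          (fun j _ => by simpa using (by linarith [hale j] : (0:ℝ) ≤ 1 - a j)) hmem
      rw [hd2'] at h2
      linarith
    have := Finset.single_le_sum (f := g) (fun i _ => hg0 i) hdS
    linarith
  -- sum of a
  have hsum_a : (∑ i, a i) = (m:ℝ) := by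
    rw [show (∑ i, a i) = ∑ i ∈ S, a i from
      (Finset.sum_subset S.subset_univ (fun i _ hiS => by
        rcases ha i with h | h
        · exact h
        · exact absurd (by simp [hSdef, h]) hiS)).symm]
    rw [Finset.sum_congr rfl (fun i hi => by
      simp [hSdef] at hi; exact hi)]
    simp [hmdef]
  -- quadratic form
  have hQ : a ⬝ᵥ (G.adjMatrix ℝ) *ᵥ a = (m:ℝ) * K - cut := by
    have h1 : a ⬝ᵥ (G.adjMatrix ℝ) *ᵥ a
        = ∑ i, a i * ∑ j ∈ G.neighborFinset i, a j := by
      simp [dotProduct, SimpleGraph.adjMatrix_mulVec_apply]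
    rw [h1]
    rw [show (∑ i, a i * ∑ j ∈ G.neighborFinset i, a j)
        = ∑ i ∈ S, a i * ∑ j ∈ G.neighborFinset i, a j from
      (Finset.sum_subset S.subset_univ (fun i _ hiS => by
        rcases ha i with h | h
        · simp [h]
        · exact absurd (by simp [hSdef, h]) hiS)).symm]
    have hinner : ∀ i, (∑ j ∈ G.neighborFinset i, a j) = (K:ℝ) - g i := by
      intro i
      have hc : (G.neighborFinset i).card = K := hreg i
      have heq : (∑ j ∈ G.neighborFinset i, a j)
          = (∑ j ∈ G.neighborFinset i, (1:ℝ)) - ∑ j ∈ G.neighborFinset i, (1 - a j) := by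
        rw [← Finset.sum_sub_distrib]; ring_nf
      have hone : (∑ _j ∈ G.neighborFinset i, (1:ℝ)) = (K:ℝ) := by
        rw [Finset.sum_const, hc]; simp
      rw [heq, hone]
    calc (∑ i ∈ S, a i * ∑ j ∈ G.neighborFinset i, a j)
        = ∑ i ∈ S, ((K:ℝ) - g i) := Finset.sum_congr rfl (fun i hi => by
          have : a i = 1 := by simpa [hSdef] using hi
          rw [hinner, this, one_mul])
      _ = (m:ℝ) * K - cut := by
          rw [Finset.sum_sub_distrib]
          simp [hcutdef, hmdef, mul_comm]
  have hmN : (m:ℝ) ≤ N := by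
    have := Finset.card_le_univ S
    simp at this
    exact_mod_cast this
  set r : ℝ := θ * K / N with hrdef
  have hΦa : Φ a = θ * K / 2 - r * m + (m:ℝ)/2 - cut/(2*K) := by
    rw [hΦ, hsum_a, hQ]
    field_simp
    ring
  have hΦ0 : Φ (fun _ => (0:ℝ)) = θ * K / 2 := by
    rw [hΦ]
    simp [dotProduct]
  have hΦ1 : Φ (fun _ => (1:ℝ)) = θ * K / 2 - θ * K + (N:ℝ)/2 := by
    rw [hΦ]
    have hq1 : (fun _ => (1:ℝ)) ⬝ᵥ (G.adjMatrix ℝ) *ᵥ (fun _ => (1:ℝ)) = (N:ℝ) * K := by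
      simp only [dotProduct, SimpleGraph.adjMatrix_mulVec_apply, one_mul]
      rw [Finset.sum_congr rfl (fun i (_ : i ∈ Finset.univ) => by
        rw [show (∑ _j ∈ G.neighborFinset i, (1:ℝ)) = (K:ℝ) by
          have hc : (G.neighborFinset i).card = K := hreg i
          rw [Finset.sum_const, hc]; simp])]
      simp [mul_comm]
    rw [hq1]
    simp only [Finset.sum_const, Finset.card_univ, Fintype.card_fin, nsmul_eq_mul, mul_one]
    have e1 : r * N = θ * K := by rw [hrdef]; field_simp
    have e2 : (1/(2*(K:ℝ))) * ((N:ℝ) * K) = (N:ℝ)/2 := by field_simp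
    rw [e2]
    linarith [e1]
  have h0le := hmax (fun _ => (0:ℝ)) (fun i => Or.inl rfl)
  have h1le := hmax (fun _ => (1:ℝ)) (fun i => Or.inr rfl)
  have hcutpos : 0 < cut/(2*K) := by positivity
  have hm0 : (0:ℝ) ≤ m := Nat.cast_nonneg m
  rcases le_or_gt (1/2 : ℝ) r with hr | hr
  · -- Φ a < Φ 0
    have hprod : (m:ℝ) * (r - 1/2) ≥ 0 := mul_nonneg hm0 (by linarith)
    rw [hΦ0] at h0le
    nlinarith [h0le, hΦa, hprod, hcutpos]
  · -- Φ a < Φ 1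
    have hrN : r * N = θ * K := by
      rw [hrdef]; field_simp
    have hprod : ((N:ℝ) - m) * (r - 1/2) ≤ 0 :=
      mul_nonpos_of_nonneg_of_nonpos (by linarith) (by linarith)
    rw [hΦ1] at h1le
    nlinarith [h1le, hΦa, hprod, hcutpos, hrN]
end

section
/- Let G be a connected simple undirected K-regular graph on N vertices with 2 ≤ K ≤ N−1, adjacency matrix A, and suppose θ < N/(2K). Define Φ(a) = θK/2 − (θK/N)·Σ_{i=1}^N a_i + (1/(2K))·aᵀ A a for a ∈ {0,1}^N. Then the all-ones profile 1_N is the unique maximizer of Φ over {0,1}^N, and Φ(1_N) = (N − Kθ)/2. -/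
open Finset Matrix

/-- For a connected `K`-regular graph and `θ < N/(2K)`, the all-ones
profile is the unique maximizer of `Φ` over `{0,1}^N`, and `Φ(1_N) = (N - Kθ)/2`. -/
theorem stmt_4 (N K : ℕ) (hK : 2 ≤ K) (hKN : K ≤ N - 1)
    (G : SimpleGraph (Fin N)) [DecidableRel G.Adj]
    (hconn : G.Connected) (hreg : G.IsRegularOfDegree K)
    (θ : ℝ) (hθ : θ < (N : ℝ) / (2 * (K : ℝ)))
    (Φ : (Fin N → ℝ) → ℝ)
    (hΦ : ∀ a, Φ a = θ * (K : ℝ) / 2 - (θ * (K : ℝ) / (N : ℝ)) * (∑ i, a i)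
        + (1 / (2 * (K : ℝ))) * (a ⬝ᵥ (G.adjMatrix ℝ) *ᵥ a)) :
    Φ (fun _ => (1 : ℝ)) = ((N : ℝ) - (K : ℝ) * θ) / 2 ∧
    ∀ b : Fin N → ℝ, (∀ i, b i = 0 ∨ b i = 1) → b ≠ (fun _ => (1 : ℝ)) →
      Φ b < Φ (fun _ => (1 : ℝ)) := by
  have hN : 3 ≤ N := by omega
  have hNr : (0:ℝ) < N := by exact_mod_cast (by omega : 0 < N)
  have hKr : (0:ℝ) < K := by exact_mod_cast (by omega : 0 < K)
  have hθK : 2 * (θ * K) < N := by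
    rw [lt_div_iff₀ (by positivity : (0:ℝ) < 2 * K)] at hθ
    nlinarith [hθ]
  -- Φ at all-ones
  have hdot1 : (fun _ => (1:ℝ)) ⬝ᵥ (G.adjMatrix ℝ) *ᵥ (fun _ => (1:ℝ)) = (N:ℝ) * K := by
    unfold dotProduct
    have : ∀ i : Fin N, (G.adjMatrix ℝ *ᵥ (fun _ => (1:ℝ))) i = (K:ℝ) := by
      intro i
      rw [SimpleGraph.adjMatrix_mulVec_apply, Finset.sum_const, nsmul_eq_mul, mul_one]
      have hd := hreg i
      unfold SimpleGraph.degree at hd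
      exact_mod_cast hd
    have h2 : ∑ i : Fin N, (1:ℝ) * (G.adjMatrix ℝ *ᵥ fun _ => (1:ℝ)) i = ∑ _i : Fin N, (K:ℝ) :=
      Finset.sum_congr rfl fun i _ => by rw [one_mul, this]
    rw [h2, Finset.sum_const, Finset.card_univ, Fintype.card_fin, nsmul_eq_mul]
  have h1 : Φ (fun _ => (1 : ℝ)) = ((N : ℝ) - (K : ℝ) * θ) / 2 := by
    rw [hΦ, hdot1]
    simp only [Finset.sum_const, Finset.card_univ, Fintype.card_fin, nsmul_eq_mul, mul_one]
    field_simp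
    ring
  refine ⟨h1, ?_⟩
  intro b hb hbne
  have hble : ∀ i, b i ≤ 1 := fun i => by rcases hb i with h | h <;> simp [h]
  have hbge : ∀ i, 0 ≤ b i := fun i => by rcases hb i with h | h <;> simp [h]
  -- some coordinate is 0
  obtain ⟨i0, hi0⟩ : ∃ i, b i = 0 := by
    by_contra h
    push_neg at h
    exact hbne (funext fun i => (hb i).resolve_left (h i))
  set s : ℝ := ∑ i, b i with hs
  have hslt : s < (N:ℝ) := by
    have : ∑ i : Fin N, b i < ∑ _i : Fin N, (1:ℝ) := by
      apply Finset.sum_lt_sum (fun i _ => hble i)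
      exact ⟨i0, Finset.mem_univ _, by rw [hi0]; norm_num⟩
    simpa using this
  -- quadratic form bound
  have hquad : b ⬝ᵥ (G.adjMatrix ℝ) *ᵥ b ≤ (K:ℝ) * s := by
    unfold dotProduct
    have hterm : ∀ i : Fin N, b i * (G.adjMatrix ℝ *ᵥ b) i ≤ b i * K := by
      intro i
      apply mul_le_mul_of_nonneg_left _ (hbge i)
      rw [SimpleGraph.adjMatrix_mulVec_apply]
      calc ∑ u ∈ G.neighborFinset i, b u ≤ ∑ _u ∈ G.neighborFinset i, (1:ℝ) :=
            Finset.sum_le_sum (fun u _ => hble u)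
        _ = (K:ℝ) := by
              rw [Finset.sum_const, nsmul_eq_mul, mul_one]
              have hd := hreg i
              unfold SimpleGraph.degree at hd
              exact_mod_cast hd
    calc ∑ i, b i * (G.adjMatrix ℝ *ᵥ b) i ≤ ∑ i, b i * K := Finset.sum_le_sum (fun i _ => hterm i)
      _ = (K:ℝ) * s := by rw [hs, ← Finset.sum_mul]; ring
  rw [hΦ b, h1, ← hs]
  have hc : (0:ℝ) < 1 / (2 * K) := by positivity
  have hle : (1 / (2 * (K:ℝ))) * (b ⬝ᵥ (G.adjMatrix ℝ) *ᵥ b) ≤ s / 2 := by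
    calc (1 / (2 * (K:ℝ))) * (b ⬝ᵥ (G.adjMatrix ℝ) *ᵥ b) ≤ (1 / (2 * (K:ℝ))) * ((K:ℝ) * s) :=
          mul_le_mul_of_nonneg_left hquad hc.le
      _ = s / 2 := by
          rw [show (1:ℝ)/(2*K) * (K*s) = s/2 * (K/K) by ring, div_self hKr.ne', mul_one]
  have key : θ * K / 2 - θ * K / N * s + s / 2 < ((N:ℝ) - K * θ) / 2 := by
    have hid : θ * K / N * s * N = θ * K * s := by field_simp
    nlinarith [mul_pos (sub_pos.mpr hslt) (sub_pos.mpr hθK), hid, hNr]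
  linarith [hle, key]
end

section
/- Let G be a connected simple undirected K-regular graph on N vertices with 2 ≤ K ≤ N−1, adjacency matrix A, and suppose θ = N/(2K). Define Φ(a) = θK/2 − (θK/N)·Σ_{i=1}^N a_i + (1/(2K))·aᵀ A a for a ∈ {0,1}^N. Then the set of maximizers of Φ over {0,1}^N is exactly {0_N, 1_N}, and Φ(0_N) = Φ(1_N) = N/4. -/
/-!
Writing `θK = N/2`, the potential becomes
`Φ a = N/4 - (K ∑ aᵢ - aᵀ A a) / (2K) = N/4 - ∑ᵢ aᵢ (K - (A a)ᵢ) / (2K)`.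
For a binary `a` every summand is nonnegative, since `(A a)ᵢ` counts the neighbours of `i` in the
support of `a`; so `Φ ≤ N/4`. Equality forces every neighbour of a vertex of the support to lie in
the support, and by connectedness the support is empty or everything.
-/

open Finset Matrix

namespace SimpleGraph

variable {V : Type*} {G : SimpleGraph V}

theorem Reachable.of_adj_imp {p : V → Prop} (hp : ∀ ⦃u v⦄, G.Adj u v → p u → p v) {u v : V}
    (h : G.Reachable u v) (hu : p u) : p v := by
  obtain ⟨w⟩ := h
  induction w with
  | nil => exact hu
  | cons hadj _ ih => exact ih (hp hadj hu)

variable [Fintype V] [DecidableRel G.Adj] {a : V → ℝ}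

theorem adjMatrix_mulVec_apply_le_degree (ha : ∀ j, a j ≤ 1) (i : V) :
    (G.adjMatrix ℝ *ᵥ a) i ≤ G.degree i := by
  rw [adjMatrix_mulVec_apply, ← card_neighborFinset_eq_degree]
  exact (sum_le_card_nsmul _ _ 1 fun j _ => ha j).trans_eq (by simp)

theorem eq_one_of_adjMatrix_mulVec_apply_eq_degree (ha : ∀ j, a j ≤ 1) {i j : V}
    (hi : (G.adjMatrix ℝ *ᵥ a) i = G.degree i) (hij : G.Adj i j) : a j = 1 := by
  rw [adjMatrix_mulVec_apply, ← card_neighborFinset_eq_degree, cast_card] at hi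
  exact (sum_eq_sum_iff_of_le fun k _ => ha k).1 hi j (by simpa using hij)

variable {K : ℕ}

theorem IsRegularOfDegree.mul_adjMatrix_mulVec_apply_le (hreg : G.IsRegularOfDegree K)
    (ha : ∀ j, a j = 0 ∨ a j = 1) (i : V) : a i * (G.adjMatrix ℝ *ᵥ a) i ≤ a i * K := by
  have ha1 (j : V) : a j ≤ 1 := by rcases ha j with h | h <;> simp [h]
  rcases ha i with h | h
  · simp [h]
  · simpa [h, ← hreg i] using adjMatrix_mulVec_apply_le_degree ha1 i

theorem IsRegularOfDegree.dotProduct_adjMatrix_mulVec_le (hreg : G.IsRegularOfDegree K)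
    (ha : ∀ i, a i = 0 ∨ a i = 1) : a ⬝ᵥ G.adjMatrix ℝ *ᵥ a ≤ K * ∑ i, a i := by
  rw [dotProduct, mul_comm, sum_mul]
  exact sum_le_sum fun i _ => hreg.mul_adjMatrix_mulVec_apply_le ha i

theorem IsRegularOfDegree.dotProduct_adjMatrix_mulVec_eq_iff (hreg : G.IsRegularOfDegree K)
    (hconn : G.Preconnected) (ha : ∀ i, a i = 0 ∨ a i = 1) :
    a ⬝ᵥ G.adjMatrix ℝ *ᵥ a = K * ∑ i, a i ↔ a = 0 ∨ a = 1 := by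
  constructor
  · intro heq
    rw [dotProduct, mul_comm, sum_mul] at heq
    have hterm := (sum_eq_sum_iff_of_le fun i _ => hreg.mul_adjMatrix_mulVec_apply_le ha i).1 heq
    have ha1 (j : V) : a j ≤ 1 := by rcases ha j with h | h <;> simp [h]
    have hclosed : ∀ ⦃u v⦄, G.Adj u v → a u = 1 → a v = 1 := fun u v huv hu =>
      eq_one_of_adjMatrix_mulVec_apply_eq_degree ha1
        (by simpa [hu, hreg u] using hterm u (mem_univ u)) huv
    by_cases hsupp : ∃ i, a i = 1
    · obtain ⟨i, hi⟩ := hsupp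
      exact Or.inr (funext fun v => (hconn i v).of_adj_imp hclosed hi)
    · simp only [not_exists] at hsupp
      exact Or.inl (funext fun v => (ha v).resolve_right (hsupp v))
  · rintro (rfl | rfl)
    · simp
    · have hdeg (v : V) : G.degree v = K := hreg v
      simp [dotProduct, hdeg, mul_comm]

end SimpleGraph

theorem stmt_6_general (N K : ℕ) (hK : 2 ≤ K)
    (G : SimpleGraph (Fin N)) [DecidableRel G.Adj]
    (hconn : G.Connected) (hreg : G.IsRegularOfDegree K)
    (θ : ℝ) (hθ : θ = (N : ℝ) / (2 * (K : ℝ)))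
    (Φ : (Fin N → ℝ) → ℝ)
    (hΦ : ∀ a, Φ a = θ * (K : ℝ) / 2 - (θ * (K : ℝ) / (N : ℝ)) * (∑ i, a i)
        + (1 / (2 * (K : ℝ))) * (a ⬝ᵥ (G.adjMatrix ℝ) *ᵥ a)) :
    Φ (fun _ => (0 : ℝ)) = (N : ℝ) / 4 ∧ Φ (fun _ => (1 : ℝ)) = (N : ℝ) / 4 ∧
    ∀ b : Fin N → ℝ, (∀ i, b i = 0 ∨ b i = 1) →
      ((∀ c : Fin N → ℝ, (∀ i, c i = 0 ∨ c i = 1) → Φ c ≤ Φ b) ↔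
        (b = (fun _ => (0 : ℝ)) ∨ b = (fun _ => (1 : ℝ)))) := by
  have hN : (N : ℝ) ≠ 0 := Nat.cast_ne_zero.2 (Fin.pos_iff_nonempty.2 hconn.nonempty).ne'
  have hK0 : (0 : ℝ) < K := by exact_mod_cast (by omega : 0 < K)
  have hΦ' (a : Fin N → ℝ) :
      Φ a = N / 4 - (K * ∑ i, a i - a ⬝ᵥ G.adjMatrix ℝ *ᵥ a) / (2 * K) := by
    rw [hΦ, hθ]
    field_simp
    ring
  have hle (c : Fin N → ℝ) (hc : ∀ i, c i = 0 ∨ c i = 1) : Φ c ≤ N / 4 := by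
    rw [hΦ', sub_le_self_iff]
    exact div_nonneg (sub_nonneg.2 (hreg.dotProduct_adjMatrix_mulVec_le hc)) (by positivity)
  have heq (c : Fin N → ℝ) (hc : ∀ i, c i = 0 ∨ c i = 1) : Φ c = N / 4 ↔ c = 0 ∨ c = 1 := by
    rw [hΦ', sub_eq_self, div_eq_zero_iff, sub_eq_zero, eq_comm,
      hreg.dotProduct_adjMatrix_mulVec_eq_iff hconn.preconnected hc]
    simp [hK0.ne']
  have hΦ0 : Φ 0 = N / 4 := (heq 0 fun _ => Or.inl rfl).2 (Or.inl rfl)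
  refine ⟨hΦ0, (heq 1 fun _ => Or.inr rfl).2 (Or.inr rfl), fun b hb => ?_⟩
  exact Iff.trans ⟨fun hmax => (hle b hb).antisymm (hΦ0 ▸ hmax 0 fun _ => Or.inl rfl),
    fun hb4 c hc => hb4 ▸ hle c hc⟩ (heq b hb)

/-- For a connected `K`-regular graph and `θ = N/(2K)`, the set of
maximizers of `Φ` over `{0,1}^N` is exactly `{0_N, 1_N}`, and `Φ(0_N) = Φ(1_N) = N/4`. -/
theorem stmt_6 (N K : ℕ) (hK : 2 ≤ K) (hKN : K ≤ N - 1)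
    (G : SimpleGraph (Fin N)) [DecidableRel G.Adj]
    (hconn : G.Connected) (hreg : G.IsRegularOfDegree K)
    (θ : ℝ) (hθ : θ = (N : ℝ) / (2 * (K : ℝ)))
    (Φ : (Fin N → ℝ) → ℝ)
    (hΦ : ∀ a, Φ a = θ * (K : ℝ) / 2 - (θ * (K : ℝ) / (N : ℝ)) * (∑ i, a i)
        + (1 / (2 * (K : ℝ))) * (a ⬝ᵥ (G.adjMatrix ℝ) *ᵥ a)) :
    Φ (fun _ => (0 : ℝ)) = (N : ℝ) / 4 ∧ Φ (fun _ => (1 : ℝ)) = (N : ℝ) / 4 ∧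
    ∀ b : Fin N → ℝ, (∀ i, b i = 0 ∨ b i = 1) →
      ((∀ c : Fin N → ℝ, (∀ i, c i = 0 ∨ c i = 1) → Φ c ≤ Φ b) ↔
        (b = (fun _ => (0 : ℝ)) ∨ b = (fun _ => (1 : ℝ)))) :=
  stmt_6_general N K hK G hconn hreg θ hθ Φ hΦ
end

section
/- Let N and K be natural numbers with 0 ≤ K ≤ N−1. Then there exists a simple undirected K-regular graph on N vertices if and only if N·K is even. -/
/-- The set of "jump lengths" used to build a circulant `K`-regular graph on `N` vertices. -/
def stmt7Jumps (N K : ℕ) : Finset ℕ :=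
  (Finset.Icc 1 (K / 2) ∪ Finset.Icc (N - K / 2) (N - 1)) ∪
    (if K % 2 = 1 then {N / 2} else ∅)

lemma stmt7_mem_jumps {N K a : ℕ} :
    a ∈ stmt7Jumps N K ↔
      (1 ≤ a ∧ a ≤ K / 2) ∨ (N - K / 2 ≤ a ∧ a ≤ N - 1) ∨ (K % 2 = 1 ∧ a = N / 2) := by
  unfold stmt7Jumps
  split_ifs with h <;>
    simp [Finset.mem_union, Finset.mem_Icc, h] <;> tauto

lemma stmt7_jumps_bounds {N K : ℕ} (hN : 2 ≤ N) (hK1 : 1 ≤ K) (hK : K ≤ N - 1)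
    (hpar : N % 2 = 0 ∨ K % 2 = 0) :
    ∀ a ∈ stmt7Jumps N K, 1 ≤ a ∧ a ≤ N - 1 ∧ N - a ∈ stmt7Jumps N K := by
  intro a ha
  rw [stmt7_mem_jumps] at ha
  refine ⟨?_, ?_, ?_⟩
  · omega
  · omega
  · rw [stmt7_mem_jumps]; omega

lemma stmt7_jumps_card {N K : ℕ} (hN : 2 ≤ N) (hK1 : 1 ≤ K) (hK : K ≤ N - 1)
    (hpar : N % 2 = 0 ∨ K % 2 = 0) :
    (stmt7Jumps N K).card = K := by
  have hd1 : Disjoint (Finset.Icc 1 (K / 2)) (Finset.Icc (N - K / 2) (N - 1)) := by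
    rw [Finset.disjoint_left]
    intro a ha hb
    rw [Finset.mem_Icc] at ha hb
    omega
  unfold stmt7Jumps
  split_ifs with h
  · have hd2 : Disjoint (Finset.Icc 1 (K / 2) ∪ Finset.Icc (N - K / 2) (N - 1))
        ({N / 2} : Finset ℕ) := by
      rw [Finset.disjoint_left]
      intro a ha hb
      rw [Finset.mem_union, Finset.mem_Icc, Finset.mem_Icc] at ha
      rw [Finset.mem_singleton] at hb
      omega
    rw [Finset.card_union_of_disjoint hd2, Finset.card_union_of_disjoint hd1,
      Nat.card_Icc, Nat.card_Icc, Finset.card_singleton]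
    omega
  · rw [Finset.union_empty, Finset.card_union_of_disjoint hd1, Nat.card_Icc, Nat.card_Icc]
    omega

open Fin.NatCast Fin.CommRing in
lemma stmt7_exists {N K : ℕ} (hN : 2 ≤ N) (hK1 : 1 ≤ K) (hK : K ≤ N - 1)
    (hpar : N % 2 = 0 ∨ K % 2 = 0) :
    ∃ G : SimpleGraph (Fin N), ∀ v : Fin N, Nat.card (G.neighborSet v) = K := by
  haveI : NeZero N := ⟨by omega⟩
  set D : Finset (Fin N) := (stmt7Jumps N K).image (fun a : ℕ => (a : Fin N)) with hD
  -- membership characterization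
  have hbd := stmt7_jumps_bounds hN hK1 hK hpar
  have hDmem : ∀ x : Fin N, x ∈ D ↔ (x : ℕ) ∈ stmt7Jumps N K := by
    intro x
    rw [hD, Finset.mem_image]
    constructor
    · rintro ⟨a, ha, rfl⟩
      obtain ⟨h1, h2, -⟩ := hbd a ha
      rwa [Fin.val_natCast, Nat.mod_eq_of_lt (by omega)]
    · intro hx
      exact ⟨(x : ℕ), hx, Fin.cast_val_eq_self x⟩
  -- cardinality
  have hcard : D.card = K := by
    rw [hD, Finset.card_image_of_injOn, stmt7_jumps_card hN hK1 hK hpar]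
    intro a ha b hb hab
    obtain ⟨ha1, ha2, -⟩ := hbd a ha
    obtain ⟨hb1, hb2, -⟩ := hbd b hb
    have : ((a : Fin N) : ℕ) = ((b : Fin N) : ℕ) := congrArg Fin.val hab
    rwa [Fin.val_natCast, Fin.val_natCast, Nat.mod_eq_of_lt (by omega),
      Nat.mod_eq_of_lt (by omega)] at this
  -- 0 is not a jump
  have hzero : ∀ x : Fin N, x ∈ D → x ≠ 0 := by
    intro x hx h0
    rw [hDmem] at hx
    obtain ⟨h1, -, -⟩ := hbd _ hx
    rw [h0] at h1
    simp at h1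
  -- D is symmetric under negation
  have hnegmem : ∀ x : Fin N, x ∈ D → -x ∈ D := by
    intro x hx
    rw [hDmem] at hx ⊢
    obtain ⟨h1, h2, h3⟩ := hbd _ hx
    have hneg : -x = (((N - (x : ℕ)) : ℕ) : Fin N) := by
      have hadd : (((x : ℕ) : Fin N)) + (((N - (x : ℕ)) : ℕ) : Fin N) = 0 := by
        rw [← Nat.cast_add]
        have : (x : ℕ) + (N - (x : ℕ)) = N := by omega
        rw [this, Fin.natCast_self]
      rw [Fin.cast_val_eq_self] at hadd
      exact (neg_eq_of_add_eq_zero_right hadd).symm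
    rw [hneg, Fin.val_natCast, Nat.mod_eq_of_lt (by omega)]
    exact h3
  have hDneg : ∀ x : Fin N, x ∈ D ↔ -x ∈ D := by
    intro x
    constructor
    · exact hnegmem x
    · intro hx
      have := hnegmem _ hx
      rwa [neg_neg] at this
  -- the graph
  refine ⟨SimpleGraph.circulantGraph (↑D : Set (Fin N)), ?_⟩
  have hadj : ∀ u v : Fin N,
      (SimpleGraph.circulantGraph (↑D : Set (Fin N))).Adj u v ↔ u - v ∈ D := by
    intro u v
    rw [SimpleGraph.circulantGraph_adj]
    simp only [Finset.mem_coe]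
    constructor
    · rintro ⟨hne, h | h⟩
      · exact h
      · have := (hDneg (v - u)).1 h
        rwa [neg_sub] at this
    · intro h
      refine ⟨?_, Or.inl h⟩
      intro he
      exact hzero _ h (by rw [he, sub_self])
  intro v
  have hns : (SimpleGraph.circulantGraph (↑D : Set (Fin N))).neighborSet v =
      (fun d : Fin N => v + d) '' (↑D : Set (Fin N)) := by
    ext w
    simp only [SimpleGraph.mem_neighborSet, hadj, Set.mem_image, Finset.mem_coe]
    constructor
    · intro h
      refine ⟨w - v, ?_, by ring⟩
      have := (hDneg (v - w)).1 h
      rwa [neg_sub] at this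
    · rintro ⟨d, hd, rfl⟩
      have := (hDneg d).1 hd
      have heq : v - (v + d) = -d := by ring
      rwa [heq]
  calc Nat.card ((SimpleGraph.circulantGraph (↑D : Set (Fin N))).neighborSet v)
      = ((SimpleGraph.circulantGraph (↑D : Set (Fin N))).neighborSet v).ncard :=
        Nat.card_coe_set_eq _
    _ = ((fun d : Fin N => v + d) '' (↑D : Set (Fin N))).ncard := by rw [hns]
    _ = (↑D : Set (Fin N)).ncard :=
        Set.ncard_image_of_injective _ (add_right_injective v)
    _ = D.card := Set.ncard_coe_finset D
    _ = K := hcard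

/-- For `0 ≤ K ≤ N-1`, a simple undirected `K`-regular graph on `N`
vertices exists if and only if `N·K` is even. -/
theorem stmt_7 (N K : ℕ) (hK : K ≤ N - 1) :
    (∃ G : SimpleGraph (Fin N), ∀ v : Fin N, Nat.card (G.neighborSet v) = K) ↔
      Even (N * K) := by
  constructor
  · rintro ⟨G, hG⟩
    classical
    have hdeg : ∀ v : Fin N, G.degree v = K := by
      intro v
      rw [← hG v, ← SimpleGraph.card_neighborSet_eq_degree, Nat.card_eq_fintype_card]
    have hsum := SimpleGraph.sum_degrees_eq_twice_card_edges G
    have : ∑ v : Fin N, G.degree v = N * K := by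
      simp [hdeg, Finset.sum_const, Fintype.card_fin, mul_comm]
    rw [this] at hsum
    rw [hsum]
    exact even_two_mul _
  · intro hNK
    rcases Nat.eq_zero_or_pos K with hK0 | hKpos
    · subst hK0
      refine ⟨⊥, fun v => ?_⟩
      have hbot : (⊥ : SimpleGraph (Fin N)).neighborSet v = ∅ := by
        ext w; simp
      rw [hbot]
      simp
    · have hN : 2 ≤ N := by omega
      have hpar : N % 2 = 0 ∨ K % 2 = 0 := by
        rcases Nat.even_mul.mp hNK with h | h
        · exact Or.inl (Nat.even_iff.mp h)
        · exact Or.inr (Nat.even_iff.mp h)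
      exact stmt7_exists hN hKpos hK hpar
end

section
/- Let A be the adjacency matrix of a connected simple undirected K-regular graph on N vertices with 2 ≤ K ≤ N−1, let θ ∈ ℝ with θ ≠ N/(2K), and let β ≥ 0. Define Φ̂(a) = −(Kθ/N)·Σ_{i=1}^N a_i + (1/(2K))·aᵀ A a for a ∈ {0,1}^N, let a* be the unique maximizer of Φ̂ over {0,1}^N, and let μ(a | β) = exp(β·Φ̂(a)) / Σ_{a'∈{0,1}^N} exp(β·Φ̂(a')). Then μ(a* | β) ≥ exp(β·Φ̂(a*))·exp(β·K·θ) / (exp(β/2) + exp(β·K·θ/N))^N. -/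
open Matrix

/-- The binary action profile in `{0,1}^N ⊆ ℝ^N` encoded by a boolean vector. -/
def boolVec {n : ℕ} (x : Fin n → Bool) : Fin n → ℝ := fun i => if x i then 1 else 0

/-- For a connected `K`-regular graph, `θ ≠ N/(2K)` and `β ≥ 0`, the Gibbs
probability of the unique maximizer `a*` of the reduced potential `Φ̂` satisfies
`μ(a* | β) ≥ exp(β Φ̂(a*)) exp(βKθ) / (exp(β/2) + exp(βKθ/N))^N`. -/
theorem stmt_17 (N K : ℕ) (hK : 2 ≤ K) (hKN : K ≤ N - 1)
    (G : SimpleGraph (Fin N)) [DecidableRel G.Adj]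
    (hconn : G.Connected) (hreg : G.IsRegularOfDegree K)
    (θ : ℝ) (hθ : θ ≠ (N : ℝ) / (2 * (K : ℝ))) (β : ℝ) (hβ : 0 ≤ β)
    (Φ : (Fin N → ℝ) → ℝ)
    (hΦ : ∀ x, Φ x = -((K : ℝ) * θ / (N : ℝ)) * (∑ i, x i)
        + (1 / (2 * (K : ℝ))) * (x ⬝ᵥ (G.adjMatrix ℝ) *ᵥ x))
    (astar : Fin N → ℝ) (hbin : ∀ i, astar i = 0 ∨ astar i = 1)
    (hmax : ∀ b : Fin N → ℝ, (∀ i, b i = 0 ∨ b i = 1) → b ≠ astar → Φ b < Φ astar)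
    (μ : ℝ → ℝ)
    (hμ : ∀ b : ℝ, μ b = Real.exp (b * Φ astar) /
        ∑ x : Fin N → Bool, Real.exp (b * Φ (boolVec x))) :
    μ β ≥ Real.exp (β * Φ astar) * Real.exp (β * (K : ℝ) * θ) /
      (Real.exp (β / 2) + Real.exp (β * (K : ℝ) * θ / (N : ℝ))) ^ N := by
  have hN : 0 < N := by omega
  have hNR : (0 : ℝ) < N := by exact_mod_cast hN
  have hKR : (0 : ℝ) < K := by exact_mod_cast (by omega : 0 < K)
  set c : ℝ := 1 / 2 - (K : ℝ) * θ / N with hc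
  -- Step A: pointwise bound on Φ over binary vectors
  have stepA : ∀ x : Fin N → Bool, Φ (boolVec x) ≤ c * ∑ i, boolVec x i := by
    intro x
    rw [hΦ]
    have hv0 : ∀ i, 0 ≤ boolVec x i := by
      intro i; unfold boolVec; split <;> norm_num
    have hv1 : ∀ i, boolVec x i ≤ 1 := by
      intro i; unfold boolVec; split <;> norm_num
    have hQ : (boolVec x) ⬝ᵥ (G.adjMatrix ℝ) *ᵥ (boolVec x)
        ≤ (K : ℝ) * ∑ i, boolVec x i := by
      rw [dotProduct, Finset.mul_sum]
      apply Finset.sum_le_sum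
      intro i _
      rw [mul_comm ((K : ℝ)) _]
      apply mul_le_mul_of_nonneg_left _ (hv0 i)
      rw [SimpleGraph.adjMatrix_mulVec_apply]
      calc ∑ u ∈ G.neighborFinset i, boolVec x u
          ≤ ∑ u ∈ G.neighborFinset i, (1 : ℝ) := Finset.sum_le_sum fun j _ => hv1 j
        _ = (G.neighborFinset i).card := by simp
        _ = (K : ℝ) := by rw [G.card_neighborFinset_eq_degree, hreg i]
    have h2K : (0 : ℝ) < 1 / (2 * K) := by positivity
    have hs0 : (0 : ℝ) ≤ ∑ i, boolVec x i := Finset.sum_nonneg fun i _ => hv0 i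
    calc -((K : ℝ) * θ / N) * (∑ i, boolVec x i)
            + (1 / (2 * K)) * ((boolVec x) ⬝ᵥ (G.adjMatrix ℝ) *ᵥ (boolVec x))
        ≤ -((K : ℝ) * θ / N) * (∑ i, boolVec x i)
            + (1 / (2 * K)) * ((K : ℝ) * ∑ i, boolVec x i) := by
          have := mul_le_mul_of_nonneg_left hQ h2K.le
          linarith
      _ = c * ∑ i, boolVec x i := by
          rw [hc]; field_simp; ring
  -- Step B: partition function bound
  have stepB : (∑ x : Fin N → Bool, Real.exp (β * Φ (boolVec x)))
      ≤ (1 + Real.exp (β * c)) ^ N := by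
    have key : ∀ x : Fin N → Bool, Real.exp (β * Φ (boolVec x))
        ≤ ∏ i, (if x i then Real.exp (β * c) else 1) := by
      intro x
      have : Real.exp (β * Φ (boolVec x)) ≤ Real.exp (β * (c * ∑ i, boolVec x i)) :=
        Real.exp_le_exp.2 (mul_le_mul_of_nonneg_left (stepA x) hβ)
      refine this.trans_eq ?_
      rw [Finset.mul_sum, Finset.mul_sum, Real.exp_sum]
      apply Finset.prod_congr rfl
      intro i _
      unfold boolVec
      by_cases h : x i <;> simp [h]
    have swap : (∏ i : Fin N, ∑ b : Bool, (if b = true then Real.exp (β * c) else 1))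
        = ∑ x : Fin N → Bool, ∏ i, (if x i = true then Real.exp (β * c) else 1) :=
      Fintype.prod_sum (fun (_ : Fin N) (b : Bool) => if b = true then Real.exp (β * c) else 1)
    calc (∑ x : Fin N → Bool, Real.exp (β * Φ (boolVec x)))
        ≤ ∑ x : Fin N → Bool, ∏ i, (if x i = true then Real.exp (β * c) else 1) :=
          Finset.sum_le_sum fun x _ => key x
      _ = ∏ i : Fin N, ∑ b : Bool, (if b = true then Real.exp (β * c) else 1) := swap.symm
      _ = (1 + Real.exp (β * c)) ^ N := by
          simp [Fintype.sum_bool, add_comm]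
  -- Final assembly
  set Z := ∑ x : Fin N → Bool, Real.exp (β * Φ (boolVec x)) with hZ
  have hZpos : 0 < Z := Finset.sum_pos (fun x _ => Real.exp_pos _) ⟨fun _ => false, Finset.mem_univ _⟩
  set D : ℝ := Real.exp (β / 2) + Real.exp (β * K * θ / N) with hD
  have hDpos : (0 : ℝ) < D := by positivity
  have hprod : D ^ N = (1 + Real.exp (β * c)) ^ N * Real.exp (β * K * θ) := by
    have h1 : Real.exp (β * K * θ) = Real.exp (β * K * θ / N) ^ N := by
      rw [← Real.exp_nat_mul]
      congr 1
      field_simp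
    rw [h1, ← mul_pow]
    congr 1
    rw [hD, hc, add_mul, one_mul, ← Real.exp_add]
    rw [add_comm]
    congr 1
    field_simp
    congr 1
    rw [div_eq_div_iff (by norm_num) (mul_pos two_pos hNR).ne']
    ring
  have hZD : Real.exp (β * K * θ) * Z ≤ D ^ N := by
    rw [hprod, mul_comm]
    exact mul_le_mul_of_nonneg_right stepB (Real.exp_pos _).le
  rw [hμ, ← hZ, ge_iff_le, div_le_div_iff₀ (by positivity) hZpos]
  calc Real.exp (β * Φ astar) * Real.exp (β * ↑K * θ) * Z
      = Real.exp (β * Φ astar) * (Real.exp (β * ↑K * θ) * Z) := by ring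
    _ ≤ Real.exp (β * Φ astar) * D ^ N :=
        mul_le_mul_of_nonneg_left hZD (Real.exp_pos _).le
end
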